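/- For every integer n ≥ 2, the crown poset S_n has local dimension at most 3. -/

import Mathlib

open Classical

/-- A finite simple graph is an interval graph if each vertex can be assigned a
closed real interval so that distinct vertices are adjacent iff their intervals
intersect. -/
def IsIntervalGraph {V : Type} (I : SimpleGraph V) : Prop :=
  ∃ l r : V → ℝ, ∀ u v : V, u ≠ v →
    (I.Adj u v ↔ (Set.Icc (l u) (r u) ∩ Set.Icc (l v) (r v)).Nonempty)

/-- A vertex is universal if it is adjacent to every other vertex. -/
def IsUniversal {V : Type} (I : SimpleGraph V) (v : V) : Prop :=
  ∀ u : V, u ≠ v → I.Adj v u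

/-- `G` has a local box representation where every vertex is non-universal in at
most `t` of the interval graphs. -/
def LocalBoxRep {V : Type} (G : SimpleGraph V) (t : ℕ) : Prop :=
  ∃ (k : ℕ) (I : Fin k → SimpleGraph V),
    (∀ i, IsIntervalGraph (I i)) ∧
    (∀ u v : V, u ≠ v → (G.Adj u v ↔ ∀ i, (I i).Adj u v)) ∧
    (∀ v : V, {i : Fin k | ¬ IsUniversal (I i) v}.ncard ≤ t)

/-- Local boxicity of a graph. -/
noncomputable def lbox {V : Type} (G : SimpleGraph V) : ℕ :=
  sInf {t : ℕ | LocalBoxRep G t}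

/-- Iterated base-2 logarithm: the number of times `logb 2` must be applied
before the result becomes at most 1. -/
noncomputable def logStar (x : ℝ) : ℕ :=
  sInf {n : ℕ | (Real.logb 2)^[n] x ≤ 1}

/-- A graph is claw-free if it has no induced `K_{1,3}`. -/
def ClawFree {V : Type} (G : SimpleGraph V) : Prop :=
  ∀ v a b c : V, a ≠ b → a ≠ c → b ≠ c →
    ¬ (G.Adj v a ∧ G.Adj v b ∧ G.Adj v c ∧ ¬ G.Adj a b ∧ ¬ G.Adj a c ∧ ¬ G.Adj b c)

/-- Comparability graph of a poset. -/
def compGraph (α : Type) [PartialOrder α] : SimpleGraph α where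
  Adj x y := x ≠ y ∧ (x ≤ y ∨ y ≤ x)
  symm := by
    constructor
    intro x y h
    exact ⟨h.1.symm, h.2.symm⟩
  loopless := by
    constructor
    intro x h
    exact h.1 rfl

/-- A partial linear extension of a poset, given as a duplicate-free list
(ordered by position) which extends the partial order on its elements. -/
def IsPLE {α : Type} [PartialOrder α] [DecidableEq α] (L : List α) : Prop :=
  L.Nodup ∧ ∀ x ∈ L, ∀ y ∈ L, x ≤ y → L.idxOf x ≤ L.idxOf y

/-- `x` appears below `y` in the list `L`. -/
def Below {α : Type} [DecidableEq α] (L : List α) (x y : α) : Prop :=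
  x ∈ L ∧ y ∈ L ∧ L.idxOf x < L.idxOf y

/-- A local realizer of a poset: a family of ple's such that every strict
relation is witnessed, and every incomparable pair is reversed twice. -/
def IsLocalRealizer {α : Type} [PartialOrder α] [DecidableEq α] {k : ℕ}
    (L : Fin k → List α) : Prop :=
  (∀ i, IsPLE (L i)) ∧
  (∀ x y : α, x < y → ∃ i, Below (L i) x y) ∧
  (∀ x y : α, ¬ x ≤ y → ¬ y ≤ x →
    (∃ i, Below (L i) x y) ∧ (∃ i, Below (L i) y x))

/-- Local dimension of a poset: the least `t` such that some local realizer has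
every element in at most `t` ple's. -/
noncomputable def ldim (α : Type) [PartialOrder α] [DecidableEq α] : ℕ :=
  sInf {t : ℕ | ∃ (k : ℕ) (L : Fin k → List α), IsLocalRealizer L ∧
    ∀ x : α, {i : Fin k | x ∈ L i}.ncard ≤ t}

/-- Product dimension of a graph. -/
noncomputable def prodDim {V : Type} (G : SimpleGraph V) : ℕ :=
  sInf {k : ℕ | 0 < k ∧ ∃ f : V → Fin k → ℕ,
    ∀ u v : V, u ≠ v → (G.Adj u v ↔ ∀ i, f u i ≠ f v i)}

/-- A poset has height at most 2: every chain has at most 2 elements. -/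
def HeightAtMostTwo (α : Type) [Preorder α] : Prop :=
  ∀ x y z : α, x ≤ y → y ≤ z → x = y ∨ y = z

/-- Ground set of the crown poset S_n: a_i = (i, false), b_i = (i, true). -/
def Crown (n : ℕ) : Type := Fin n × Bool

def Crown.toProd {n : ℕ} : Crown n → Fin n × Bool := fun x => x

instance (n : ℕ) : Fintype (Crown n) := inferInstanceAs (Fintype (Fin n × Bool))
instance (n : ℕ) : DecidableEq (Crown n) :=
  inferInstanceAs (DecidableEq (Fin n × Bool))

/-- The crown poset order: a_i < b_j iff i ≠ j, and these are the only strict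
comparabilities. -/
instance crownOrder (n : ℕ) : PartialOrder (Crown n) where
  le x y := x = y ∨
    (x.toProd.2 = false ∧ y.toProd.2 = true ∧ x.toProd.1 ≠ y.toProd.1)
  le_refl x := Or.inl rfl
  le_trans := by
    rintro a b c (rfl | ⟨h1, h2, h3⟩) h
    · exact h
    · rcases h with rfl | ⟨h4, h5, h6⟩
      · exact Or.inr ⟨h1, h2, h3⟩
      · rw [h2] at h4
        exact absurd h4 (by simp)
  le_antisymm := by
    rintro a b (rfl | ⟨h1, h2, h3⟩) h
    · rfl
    · rcases h with rfl | ⟨h4, h5, h6⟩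
      · rfl
      · rw [h2] at h4
        exact absurd h4 (by simp)

/-!
Two ple's list all `a_i` and then all `b_i`, with the indices once in increasing and once in
decreasing order. Together they put every `a_i` below every `b_j` and list any two elements of
the same level in both orders; the only reversal still missing, `b_i` below the incomparable
`a_i`, is supplied by the two-element ple `[b_i, a_i]`. Every element then lies in exactly
three ple's.
-/

open List Function

theorem List.idxOf_map_of_injective {α β : Type*} [DecidableEq α] [DecidableEq β] {f : α → β}
    (hf : Injective f) (a : α) : ∀ l : List α, (l.map f).idxOf (f a) = l.idxOf a
  | [] => rfl
  | b :: l => by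
    by_cases h : b = a
    · subst h; simp
    · rw [map_cons, idxOf_cons_ne _ (hf.ne h), idxOf_cons_ne _ h,
        idxOf_map_of_injective hf a l]

section Below

variable {α : Type} [DecidableEq α] {l l₁ l₂ : List α} {x y : α}

theorem Below.append_left (h : Below l₁ x y) : Below (l₁ ++ l₂) x y := by
  obtain ⟨hx, hy, hxy⟩ := h
  refine ⟨mem_append_left _ hx, mem_append_left _ hy, ?_⟩
  rwa [idxOf_append_of_mem hx, idxOf_append_of_mem hy]

theorem Below.append_right (hx : x ∉ l₁) (hy : y ∉ l₁) (h : Below l₂ x y) :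
    Below (l₁ ++ l₂) x y := by
  obtain ⟨hx₂, hy₂, hxy⟩ := h
  refine ⟨mem_append_right _ hx₂, mem_append_right _ hy₂, ?_⟩
  rw [idxOf_append_of_notMem hx, idxOf_append_of_notMem hy]
  omega

theorem below_append_of_mem_of_mem (hx : x ∈ l₁) (hy : y ∈ l₂) (hy₁ : y ∉ l₁) :
    Below (l₁ ++ l₂) x y := by
  refine ⟨mem_append_left _ hx, mem_append_right _ hy, ?_⟩
  rw [idxOf_append_of_mem hx, idxOf_append_of_notMem hy₁]
  have := idxOf_lt_length_of_mem hx
  omega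

theorem below_pair (h : x ≠ y) : Below [x, y] x y := by
  refine ⟨by simp, by simp, ?_⟩
  rw [idxOf_cons_self, idxOf_cons_ne _ h, idxOf_cons_self]
  exact Nat.zero_lt_one

theorem below_map_iff {β : Type} [DecidableEq β] {f : α → β} (hf : Injective f) :
    Below (l.map f) (f x) (f y) ↔ Below l x y := by
  simp only [Below, mem_map_of_injective hf, idxOf_map_of_injective hf]

end Below

theorem below_finRange_iff {n : ℕ} {i j : Fin n} : Below (finRange n) i j ↔ i < j := by
  simp [Below]

theorem below_map_rev_finRange_iff {n : ℕ} {i j : Fin n} :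
    Below ((finRange n).map Fin.rev) i j ↔ j < i := by
  rw [← Fin.rev_rev i, ← Fin.rev_rev j, below_map_iff Fin.rev_injective, below_finRange_iff,
    Fin.rev_rev, Fin.rev_rev, Fin.rev_lt_rev]

theorem isPLE_of_lt_imp_idxOf_lt {α : Type} [PartialOrder α] [DecidableEq α] {L : List α}
    (hL : L.Nodup) (h : ∀ x ∈ L, ∀ y ∈ L, x < y → L.idxOf x < L.idxOf y) : IsPLE L := by
  refine ⟨hL, fun x hx y hy hxy => ?_⟩
  rcases hxy.eq_or_lt with rfl | hlt
  · exact le_rfl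
  · exact (h x hx y hy hlt).le

/-- `hbelow` packages both clauses of a local realizer: `y ≰ x` holds exactly when `x < y`
or `x` and `y` are incomparable. -/
theorem ldim_le_of_family {α ι : Type} [PartialOrder α] [DecidableEq α] [Fintype ι]
    (L : ι → List α) (t : ℕ) (hple : ∀ i, IsPLE (L i))
    (hbelow : ∀ x y, ¬ y ≤ x → ∃ i, Below (L i) x y)
    (hfreq : ∀ x, {i | x ∈ L i}.ncard ≤ t) : ldim α ≤ t := by
  let e := Fintype.equivFin ι
  have hbelow' : ∀ x y, ¬ y ≤ x → ∃ j, Below (L (e.symm j)) x y := fun x y h =>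
    let ⟨i, hi⟩ := hbelow x y h
    ⟨e i, by simpa using hi⟩
  refine Nat.sInf_le ⟨_, L ∘ e.symm, ⟨fun j => hple _, fun x y h => hbelow' x y h.not_ge,
    fun x y hxy hyx => ⟨hbelow' x y hyx, hbelow' y x hxy⟩⟩, fun x => ?_⟩
  have himage : {j | x ∈ (L ∘ e.symm) j} = e '' {i | x ∈ L i} := by
    ext j; simp [Equiv.image_eq_preimage_symm]
  rw [himage, Set.ncard_image_of_injective _ e.injective]
  exact hfreq x

namespace Crown

variable {n : ℕ}

def mk (i : Fin n) (c : Bool) : Crown n := (i, c)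

@[simp] theorem mk_inj {i j : Fin n} {c d : Bool} : mk i c = mk j d ↔ i = j ∧ c = d :=
  Prod.mk.injEq i c j d ▸ Iff.rfl

theorem mk_injective (c : Bool) : Injective (mk (n := n) · c) :=
  fun _ _ h => (mk_inj.1 h).1

theorem mk_le_mk {i j : Fin n} {c d : Bool} :
    mk i c ≤ mk j d ↔ mk i c = mk j d ∨ (c = false ∧ d = true ∧ i ≠ j) :=
  Iff.rfl

theorem exists_of_lt {x y : Crown n} (h : x < y) :
    ∃ i j : Fin n, i ≠ j ∧ x = mk i false ∧ y = mk j true := by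
  obtain ⟨i, c⟩ := x
  obtain ⟨j, d⟩ := y
  rcases mk_le_mk.1 h.le with heq | ⟨rfl, rfl, hij⟩
  · exact absurd heq h.ne
  · exact ⟨i, j, hij, rfl, rfl⟩

def layer (l : List (Fin n)) : List (Crown n) :=
  l.map (mk · false) ++ l.map (mk · true)

theorem mk_true_notMem_map_mk_false (l : List (Fin n)) (i : Fin n) :
    mk i true ∉ l.map (mk · false) := by
  simp

theorem below_layer_mk_false_mk_true {l : List (Fin n)} {i j : Fin n} (hi : i ∈ l)
    (hj : j ∈ l) : Below (layer l) (mk i false) (mk j true) :=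
  below_append_of_mem_of_mem (mem_map_of_mem hi) (mem_map_of_mem hj)
    (mk_true_notMem_map_mk_false l j)

theorem below_layer_mk_mk {l : List (Fin n)} {i j : Fin n} (h : Below l i j) (c : Bool) :
    Below (layer l) (mk i c) (mk j c) := by
  cases c
  · exact ((below_map_iff (mk_injective false)).2 h).append_left
  · exact ((below_map_iff (mk_injective true)).2 h).append_right
      (mk_true_notMem_map_mk_false l i) (mk_true_notMem_map_mk_false l j)

theorem isPLE_layer {l : List (Fin n)} (hl : l.Nodup) : IsPLE (layer l) := by
  refine isPLE_of_lt_imp_idxOf_lt ?_ fun x hx y hy hxy => ?_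
  · refine nodup_append.2 ⟨hl.map (mk_injective false), hl.map (mk_injective true), ?_⟩
    simp
  · obtain ⟨i, j, -, rfl, rfl⟩ := exists_of_lt hxy
    exact (below_layer_mk_false_mk_true (by simpa [layer] using hx) (by simpa [layer] using hy)).2.2

def realizer (n : ℕ) : Bool ⊕ Fin n → List (Crown n)
  | .inl false => layer (finRange n)
  | .inl true => layer ((finRange n).map Fin.rev)
  | .inr i => [mk i true, mk i false]

theorem isPLE_realizer : ∀ k, IsPLE (realizer n k)
  | .inl false => isPLE_layer (nodup_finRange n)
  | .inl true => isPLE_layer ((nodup_finRange n).map Fin.rev_injective)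
  | .inr i => isPLE_of_lt_imp_idxOf_lt (by simp [realizer]) fun x hx y hy hxy => by
      obtain ⟨j, k, hjk, rfl, rfl⟩ := exists_of_lt hxy
      simp [realizer] at hx hy
      exact absurd (hx.trans hy.symm) hjk

theorem exists_below_realizer_of_ne {i j : Fin n} (c : Bool) (h : i ≠ j) :
    ∃ k, Below (realizer n k) (mk i c) (mk j c) := by
  rcases h.lt_or_gt with h | h
  · exact ⟨.inl false, below_layer_mk_mk (below_finRange_iff.2 h) c⟩
  · exact ⟨.inl true, below_layer_mk_mk (below_map_rev_finRange_iff.2 h) c⟩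

theorem exists_below_realizer_of_not_le {x y : Crown n} (h : ¬ y ≤ x) :
    ∃ k, Below (realizer n k) x y := by
  obtain ⟨i, c⟩ := x
  obtain ⟨j, d⟩ := y
  change ¬ mk j d ≤ mk i c at h
  change ∃ k, Below (realizer n k) (mk i c) (mk j d)
  have hne : i ≠ j ∨ c ≠ d := by
    by_contra! hij
    obtain ⟨rfl, rfl⟩ := hij
    exact h le_rfl
  cases c <;> cases d
  · exact exists_below_realizer_of_ne false (by simpa using hne)
  · exact ⟨.inl false, below_layer_mk_false_mk_true (mem_finRange i) (mem_finRange j)⟩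
  · have hij : i = j := by
      by_contra hij
      exact h (mk_le_mk.2 (Or.inr ⟨rfl, rfl, Ne.symm hij⟩))
    subst hij
    exact ⟨.inr i, below_pair (by simp)⟩
  · exact exists_below_realizer_of_ne true (by simpa using hne)

theorem ncard_setOf_mem_realizer_le (x : Crown n) : {k | x ∈ realizer n k}.ncard ≤ 3 := by
  let s : Finset (Bool ⊕ Fin n) := {.inl false, .inl true, .inr x.1}
  have hsub : {k | x ∈ realizer n k} ⊆ s := by
    rintro (c | j) hk
    · cases c <;> simp [s]
    · have hx : x = mk j true ∨ x = mk j false := by simpa [realizer] using hk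
      obtain rfl | rfl := hx <;> simp [s, mk]
  calc {k | x ∈ realizer n k}.ncard ≤ (s : Set (Bool ⊕ Fin n)).ncard := Set.ncard_le_ncard hsub
    _ ≤ 3 := by rw [Set.ncard_coe_finset]; exact Finset.card_le_three

end Crown

theorem stmt17_general (n : ℕ) : ldim (Crown n) ≤ 3 :=
  ldim_le_of_family (Crown.realizer n) 3 Crown.isPLE_realizer
    (fun _ _ => Crown.exists_below_realizer_of_not_le) Crown.ncard_setOf_mem_realizer_le

/-- for every n ≥ 2, the crown poset S_n has local dimension at
most 3. -/
theorem stmt17 (n : ℕ) (hn : 2 ≤ n) : ldim (Crown n) ≤ 3 :=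
  stmt17_general n
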